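/- arXiv:2604.25174 — 2 statements merged into one kernel-verified Lean document; each statement's English description precedes it below -/
import Mathlib

section
/- Let X = {x_1,...,x_r} and Y = {y_1,...,y_r} and define Q_{r,0} := e_r(Y - x_r) (i.e., the alternating sum Σ_j (-1)^j e_{r-j}(Y) x_r^j) in R = ℤ[X] ⊗ Sym(Y), and Q_{r,j} := ∂_{r-j}(Q_{r,j-1}) for j > 0, where ∂ acts on the X variables. Then Q_{r,j} = e_{r-j}(Y - {x_{r-j},...,x_r}) = Σ_{i=0}^{r-j} (-1)^i e_{r-j-i}(Y) h_i(x_{r-j},...,x_r). -/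
/-!
Write `e_n(A - B) = Σ_i (-1)^i e_{n-i}(A) h_i(B)`. Peeling off `u`, resp. `v`, from
`h_{n+1}(u, v, B)` gives `h_{n+1}(u, B) - h_{n+1}(v, B) = (x_u - x_v) h_n(u, v, B)`, while the
swap of `u, v ∉ A` fixes `e(A)`. Hence the divided difference `∂_{uv}` sends
`e_{n+1}(A - (v ∪ B))` to `e_n(A - (u ∪ v ∪ B))`. Since `h_i(x_r) = x_r^i`, `Q_{r,0}` is
`e_r(Y - x_r)`, and each step of the recursion adds the next variable `x_{r-j}`.
-/

open MvPolynomial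

/-- The Demazure (divided difference) operator on `ℤ`-polynomials associated to the pair of
variables `i`, `j`: the unique `g` with `(X i - X j) * g = f - s f`, where `s` swaps `i` and `j`. -/
noncomputable def demazure {σ : Type} [DecidableEq σ] (i j : σ)
    (f : MvPolynomial σ ℤ) : MvPolynomial σ ℤ := by
  classical
  exact if h : ∃ g, (X i - X j) * g = f - rename (Equiv.swap i j) f then h.choose else 0

/-- The elementary symmetric polynomial `e_n` in the set of variables `s`. -/
noncomputable def eOn {σ : Type} [DecidableEq σ] (s : Finset σ) (n : ℕ) : MvPolynomial σ ℤ :=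
  ∑ t ∈ Finset.powersetCard n s, ∏ i ∈ t, X i

/-- The complete homogeneous symmetric polynomial `h_n` in the set of variables `s`. -/
noncomputable def hOn {σ : Type} [DecidableEq σ] (s : Finset σ) (n : ℕ) : MvPolynomial σ ℤ :=
  ∑ m ∈ s.sym n, (m.1.map X).prod

/-- The sequence `Q_{r,j}`: `Q_{r,0} = e_r(Y - x_r)` and `Q_{r,j} = ∂_{r-j}(Q_{r,j-1})`,
in `ℤ[X,Y]` with `X`-variables `Sum.inl` and `Y`-variables `Sum.inr` (`0`-indexed). -/
noncomputable def Qseq (r : ℕ) (hr : 0 < r) : ℕ → MvPolynomial (Fin r ⊕ Fin r) ℤ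
  | 0 => ∑ j ∈ Finset.range (r + 1),
      (-1) ^ j * eOn (Finset.univ.image Sum.inr) (r - j) *
        X (Sum.inl ⟨r - 1, Nat.sub_lt hr one_pos⟩) ^ j
  | (j + 1) =>
      demazure (Sum.inl ⟨(r - j - 2) % r, Nat.mod_lt _ hr⟩)
        (Sum.inl ⟨(r - j - 1) % r, Nat.mod_lt _ hr⟩) (Qseq r hr j)

section

variable {σ : Type} [DecidableEq σ]

theorem demazure_eq_of_mul_eq {i j : σ} (hij : i ≠ j) {f g : MvPolynomial σ ℤ}
    (h : (X i - X j) * g = f - rename (Equiv.swap i j) f) : demazure i j f = g := by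
  have hex : ∃ g, (X i - X j) * g = f - rename (Equiv.swap i j) f := ⟨g, h⟩
  have hne : (X i - X j : MvPolynomial σ ℤ) ≠ 0 := sub_ne_zero.mpr (hij ∘ (X_injective ·))
  rw [demazure, dif_pos hex]
  exact mul_left_cancel₀ hne (hex.choose_spec.trans h.symm)

theorem hOn_zero (s : Finset σ) : hOn s 0 = 1 := by
  simp only [hOn, Finset.sym_zero, Finset.sum_singleton]
  rfl

theorem hOn_singleton (u : σ) (n : ℕ) : hOn {u} n = X u ^ n := by
  simp [hOn, Finset.sym_singleton, Sym.coe_replicate]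

theorem Finset.filter_mem_sym_succ {u : σ} {s : Finset σ} (hu : u ∈ s) (n : ℕ) :
    (s.sym (n + 1)).filter (u ∈ ·) = (s.sym n).image (Sym.cons u) := by
  ext m
  simp only [Finset.mem_filter, Finset.mem_image, Finset.mem_sym_iff]
  constructor
  · rintro ⟨hm, hum⟩
    refine ⟨m.erase u hum, fun a ha => hm a ?_, Sym.cons_erase hum⟩
    rw [← Sym.mem_coe, Sym.coe_erase] at ha
    exact Multiset.mem_of_mem_erase ha
  · rintro ⟨m', hm', rfl⟩
    refine ⟨fun a ha => ?_, Sym.mem_cons_self u m'⟩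
    rcases Sym.mem_cons.mp ha with rfl | ha
    exacts [hu, hm' a ha]

theorem Finset.filter_notMem_sym_insert {u : σ} {s : Finset σ} (hu : u ∉ s) (n : ℕ) :
    ((insert u s).sym n).filter (u ∉ ·) = s.sym n := by
  ext m
  simp only [Finset.mem_filter, Finset.mem_sym_iff, Finset.mem_insert]
  refine ⟨fun ⟨hm, hum⟩ a ha => (hm a ha).resolve_left (by rintro rfl; exact hum ha),
    fun hm => ⟨fun a ha => Or.inr (hm a ha), fun hum => hu (hm u hum)⟩⟩

theorem hOn_insert_succ {u : σ} {s : Finset σ} (hu : u ∉ s) (n : ℕ) :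
    hOn (insert u s) (n + 1) = X u * hOn (insert u s) n + hOn s (n + 1) := by
  rw [hOn, ← Finset.sum_filter_add_sum_filter_not _ (u ∈ ·),
    Finset.filter_mem_sym_succ (Finset.mem_insert_self u s),
    Finset.filter_notMem_sym_insert hu,
    Finset.sum_image fun _ _ _ _ h => (Sym.cons_inj_right u _ _).mp h, hOn, Finset.mul_sum]
  simp [Sym.cons, Multiset.map_cons, Multiset.prod_cons, hOn]

theorem hOn_insert_succ_sub_hOn_insert_succ {u v : σ} {s : Finset σ}
    (hu : u ∉ s) (hv : v ∉ s) (huv : u ≠ v) (n : ℕ) :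
    hOn (insert u s) (n + 1) - hOn (insert v s) (n + 1)
      = (X u - X v) * hOn (insert u (insert v s)) n := by
  have expand_u := hOn_insert_succ (u := u) (s := insert v s) (by simp [huv, hu]) n
  have expand_v := hOn_insert_succ (u := v) (s := insert u s) (by simp [huv.symm, hv]) n
  rw [Finset.insert_comm] at expand_v
  linear_combination expand_u - expand_v

theorem rename_eOn {τ : Type} [DecidableEq τ] (e : σ ↪ τ) (s : Finset σ) (n : ℕ) :
    rename e (eOn s n) = eOn (s.map e) n := by
  simp [eOn, Finset.powersetCard_map, map_prod]

theorem rename_hOn {τ : Type} [DecidableEq τ] (e : σ ↪ τ) (s : Finset σ) (n : ℕ) :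
    rename e (hOn s n) = hOn (s.map e) n := by
  simp [hOn, Finset.sym_map, map_multiset_prod, Multiset.map_map]

/-- `e_n(A - B)`. -/
noncomputable def eOnSub (A B : Finset σ) (n : ℕ) : MvPolynomial σ ℤ :=
  ∑ i ∈ Finset.range (n + 1), (-1) ^ i * eOn A (n - i) * hOn B i

theorem rename_eOnSub {τ : Type} [DecidableEq τ] (e : σ ↪ τ) (A B : Finset σ) (n : ℕ) :
    rename e (eOnSub A B n) = eOnSub (A.map e) (B.map e) n := by
  simp [eOnSub, rename_eOn, rename_hOn]

theorem eOnSub_insert_succ_sub_eOnSub_insert_succ {u v : σ} {B : Finset σ}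
    (hu : u ∉ B) (hv : v ∉ B) (huv : u ≠ v) (A : Finset σ) (n : ℕ) :
    eOnSub A (insert v B) (n + 1) - eOnSub A (insert u B) (n + 1)
      = (X u - X v) * eOnSub A (insert u (insert v B)) n := by
  rw [eOnSub, eOnSub, ← Finset.sum_sub_distrib, Finset.sum_range_succ', eOnSub, Finset.mul_sum]
  simp only [hOn_zero, sub_self, add_zero]
  refine Finset.sum_congr rfl fun i _ => ?_
  rw [← mul_sub, hOn_insert_succ_sub_hOn_insert_succ hv hu huv.symm, Finset.insert_comm,
    Nat.add_sub_add_right, pow_succ]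
  ring

theorem Finset.map_swap_of_notMem {u v : σ} {s : Finset σ} (hu : u ∉ s) (hv : v ∉ s) :
    s.map (Equiv.swap u v).toEmbedding = s := by
  rw [Finset.map_eq_image, Equiv.coe_toEmbedding,
    Finset.image_congr (f := Equiv.swap u v) (g := id) fun x hx => Equiv.swap_apply_of_ne_of_ne
      (ne_of_mem_of_not_mem hx hu) (ne_of_mem_of_not_mem hx hv), Finset.image_id]

theorem demazure_eOnSub {u v : σ} {A B : Finset σ} (huv : u ≠ v) (hu : u ∉ B) (hv : v ∈ B)
    (huA : u ∉ A) (hvA : v ∉ A) (n : ℕ) :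
    demazure u v (eOnSub A B (n + 1)) = eOnSub A (insert u B) n := by
  apply demazure_eq_of_mul_eq huv
  obtain ⟨B, hvB, rfl⟩ : ∃ B', v ∉ B' ∧ B = insert v B' :=
    ⟨B.erase v, B.notMem_erase v, (Finset.insert_erase hv).symm⟩
  have huB : u ∉ B := fun h => hu (Finset.mem_insert_of_mem h)
  rw [← Equiv.coe_toEmbedding, rename_eOnSub, Finset.map_swap_of_notMem huA hvA,
    Finset.map_insert, Finset.map_swap_of_notMem huB hvB, Equiv.coe_toEmbedding,
    Equiv.swap_apply_right, eOnSub_insert_succ_sub_eOnSub_insert_succ huB hvB huv]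

end

/-- `Q_{r,j} = e_{r-j}(Y - {x_{r-j},…,x_r}) = Σ_i (-1)^i e_{r-j-i}(Y) h_i(x_{r-j},…,x_r)`. -/
theorem Qseq_eq (r : ℕ) (hr : 0 < r) (j : ℕ) (hj : j ≤ r - 1) :
    Qseq r hr j
      = ∑ i ∈ Finset.range (r - j + 1),
          (-1) ^ i * eOn (Finset.univ.image Sum.inr) (r - j - i) *
            hOn ((Finset.univ.filter fun t : Fin r => r - j - 1 ≤ (t : ℕ)).image Sum.inl) i := by
  induction j with
  | zero =>
    have last : (Finset.univ.filter fun t : Fin r => r - 1 ≤ (t : ℕ))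
        = {⟨r - 1, Nat.sub_lt hr one_pos⟩} := by
      ext t
      simp only [Finset.mem_filter, Finset.mem_univ, true_and, Finset.mem_singleton, Fin.ext_iff]
      omega
    simp only [Qseq, Nat.sub_zero, last, Finset.image_singleton, hOn_singleton]
  | succ j ih =>
    have ha : r - j - 2 < r := by omega
    have hb : r - j - 1 < r := by omega
    have step : Qseq r hr (j + 1)
        = demazure (Sum.inl ⟨r - j - 2, ha⟩) (Sum.inl ⟨r - j - 1, hb⟩) (Qseq r hr j) := by
      simp only [Qseq, Nat.mod_eq_of_lt ha, Nat.mod_eq_of_lt hb]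
    have grow : (Finset.univ.filter fun t : Fin r => r - (j + 1) - 1 ≤ (t : ℕ))
        = insert ⟨r - j - 2, ha⟩ (Finset.univ.filter fun t : Fin r => r - j - 1 ≤ (t : ℕ)) := by
      ext t
      simp only [Finset.mem_filter, Finset.mem_univ, true_and, Finset.mem_insert, Fin.ext_iff]
      omega
    have hdem := demazure_eOnSub (u := (Sum.inl ⟨r - j - 2, ha⟩ : Fin r ⊕ Fin r))
      (v := Sum.inl ⟨r - j - 1, hb⟩) (n := r - (j + 1)) (A := Finset.univ.image Sum.inr)
      (B := (Finset.univ.filter fun t : Fin r => r - j - 1 ≤ (t : ℕ)).image Sum.inl)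
      (by simp; omega) (by simp; omega) (by simp; omega) (by simp) (by simp)
    rw [show r - (j + 1) + 1 = r - j by omega] at hdem
    rw [step, ih (by omega), grow, Finset.image_insert]
    exact hdem
end

section
/- The polynomial ring ℤ[x_1,...,x_r] is a free module over the ring of symmetric polynomials ℤ[x_1,...,x_r]^{S_r} of rank r!, with graded rank (in variables of degree 2) given by the q-factorial (r)! = (r)(r-1)⋯(1) where (m) = 1 + q² + ⋯ + q^{2m-2}. -/
/-!
Induction on the number of variables. Write `x = X 0`, `Sₙ₊₁` for the symmetric polynomials in
all variables and `Sₙ` for those in `x₁, …, xₙ`. If `b` is a basis of `R[x₁, …, xₙ]` over `Sₙ`,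
then the products `x ^ j * b a` with `j ≤ n` form a basis of `R[x, x₁, …, xₙ]` over `Sₙ₊₁`.
* Spanning: `x` is a root of the monic `∏ (t - X i)` of degree `n + 1` with coefficients in
  `Sₙ₊₁`, so `1, x, …, x ^ n` span `Sₙ₊₁[x]`; this algebra contains `Sₙ`, by the recursion
  `eₖ₊₁(x, x₁, …) = eₖ₊₁(x₁, …) + x * eₖ(x₁, …)` for elementary symmetric polynomials.
* Independence: the `x`-coefficients of an element of `Sₙ₊₁` lie in `Sₙ`, which reduces a relation
  to ones of the form `∑ g j * x ^ j = 0` with `g j ∈ Sₙ₊₁`; such a relation is permutation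
  invariant, so every `X i` is a root of a polynomial of degree `≤ n`, which must vanish.
The factor `x ^ j` multiplies the graded rank by `1 + q + ⋯ + qⁿ`.
-/

open MvPolynomial
open scoped Nat

lemma Multiset.esymm_cons_succ {R : Type*} [CommSemiring R] (a : R) (s : Multiset R) (k : ℕ) :
    (a ::ₘ s).esymm (k + 1) = s.esymm (k + 1) + a * s.esymm k := by
  simp only [esymm, powersetCard_cons, map_add, sum_add, map_map, ← sum_map_mul_left]
  congr 2
  exact map_congr rfl fun t _ => prod_cons a t

lemma LinearIndependent.eq_zero_of_sum_mul_C_eq_zero {S A ι : Type*} [CommRing S] [CommRing A]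
    [Algebra S A] [Fintype ι] {b : ι → A} (hb : LinearIndependent S b) {p : ι → Polynomial A}
    (hp : ∀ i, p i ∈ Polynomial.lifts (algebraMap S A))
    (h : ∑ i, p i * Polynomial.C (b i) = 0) (i : ι) : p i = 0 := by
  choose q hq using fun i => (Polynomial.mem_lifts (p i)).1 (hp i)
  suffices q i = 0 by rw [← hq, this, Polynomial.map_zero]
  ext k
  refine Fintype.linearIndependent_iff.1 hb (fun i => (q i).coeff k) ?_ i
  simpa [← hq, Polynomial.finsetSum_coeff, Algebra.smul_def] using congr_arg (·.coeff k) h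

namespace MvPolynomial

variable {R : Type*} [CommRing R]

lemma isSymmetric_coeff_prod_X_sub_C_X {σ : Type*} [Fintype σ] (k : ℕ) :
    ((∏ i : σ, (Polynomial.X - Polynomial.C (X i : MvPolynomial σ R))).coeff k).IsSymmetric :=
  fun e => by
    have hperm : (∏ i : σ, (Polynomial.X - Polynomial.C (X i : MvPolynomial σ R))).map
        (rename e).toRingHom = ∏ i : σ, (Polynomial.X - Polynomial.C (X i)) := by
      simpa [Polynomial.map_prod] using Equiv.prod_comp e fun i => Polynomial.X - Polynomial.C (X i)
    simpa using congr_arg (·.coeff k) hperm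

lemma exists_monic_aeval_X_eq_zero [Nontrivial R] {σ : Type*} [Fintype σ] (i : σ) :
    ∃ p : Polynomial (symmetricSubalgebra σ R),
      p.Monic ∧ p.natDegree = Fintype.card σ ∧ Polynomial.aeval (X i : MvPolynomial σ R) p = 0 := by
  set P := ∏ i : σ, (Polynomial.X - Polynomial.C (X i : MvPolynomial σ R))
  have hP : P.Monic := Polynomial.monic_prod_of_monic _ _ fun i _ => Polynomial.monic_X_sub_C _
  have hlifts : P ∈ Polynomial.lifts (algebraMap (symmetricSubalgebra σ R) _) :=
    (Polynomial.lifts_iff_coeff_lifts P).2 fun k => ⟨⟨_, isSymmetric_coeff_prod_X_sub_C_X k⟩, rfl⟩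
  obtain ⟨p, hmap, hdeg, hmonic⟩ := Polynomial.lifts_and_natDegree_eq_and_monic hlifts hP
  refine ⟨p, hmonic, ?_, ?_⟩
  · rw [hdeg, Polynomial.natDegree_prod_of_monic _ _ fun i _ => Polynomial.monic_X_sub_C _]
    simp
  · rw [← Polynomial.eval_map_algebraMap, hmap, Polynomial.eval_prod]
    exact Finset.prod_eq_zero (Finset.mem_univ i) (by simp)

variable {n : ℕ}

lemma esymm_fin_succ (k : ℕ) :
    esymm (Fin (n + 1)) R (k + 1) =
      rename Fin.succ (esymm (Fin n) R (k + 1)) + X 0 * rename Fin.succ (esymm (Fin n) R k) := by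
  have hren (j : ℕ) : rename Fin.succ (esymm (Fin n) R j) =
      (Finset.univ.val.map fun i : Fin n => (X i.succ : MvPolynomial (Fin (n + 1)) R)).esymm j := by
    rw [rename_eq_aeval]
    exact aeval_esymm_eq_multiset_esymm (Fin n) R j _
  rw [hren, hren, esymm_eq_multiset_esymm, Fin.univ_succ, Finset.cons_val, Multiset.map_cons,
    Finset.map_val, Multiset.map_map, Multiset.esymm_cons_succ]
  rfl

lemma finSuccEquiv_rename_succ (g : MvPolynomial (Fin n) R) :
    finSuccEquiv R n (rename Fin.succ g) = Polynomial.C g := by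
  induction g using MvPolynomial.induction_on with
  | C a => simp [finSuccEquiv_apply]
  | add p q hp hq => simp [hp, hq]
  | mul_X p i hp => simp [hp, finSuccEquiv_X_succ]

lemma finSuccEquiv_symm_X : (finSuccEquiv R n).symm Polynomial.X = X 0 := by
  rw [AlgEquiv.symm_apply_eq, finSuccEquiv_X_zero]

lemma finSuccEquiv_symm_C (g : MvPolynomial (Fin n) R) :
    (finSuccEquiv R n).symm (Polynomial.C g) = rename Fin.succ g := by
  rw [AlgEquiv.symm_apply_eq, finSuccEquiv_rename_succ]

lemma finSuccEquiv_rename_decomposeFin_symm (π : Equiv.Perm (Fin n))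
    (f : MvPolynomial (Fin (n + 1)) R) :
    finSuccEquiv R n (rename (Equiv.Perm.decomposeFin.symm (0, π)) f) =
      (finSuccEquiv R n f).map (rename π).toRingHom := by
  induction f using MvPolynomial.induction_on with
  | C a => simp [finSuccEquiv_apply]
  | add p q hp hq => simp [hp, hq, Polynomial.map_add]
  | mul_X p i hp =>
    cases i using Fin.cases <;>
      simp [hp, Polynomial.map_mul, finSuccEquiv_X_zero, finSuccEquiv_X_succ,
        Equiv.Perm.decomposeFin_symm_apply_succ]

lemma IsSymmetric.coeff_finSuccEquiv {s : MvPolynomial (Fin (n + 1)) R} (hs : s.IsSymmetric)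
    (k : ℕ) : ((finSuccEquiv R n s).coeff k).IsSymmetric := fun π => by
  simpa [hs _] using congr_arg (·.coeff k) (finSuccEquiv_rename_decomposeFin_symm π s).symm

lemma span_X_zero_pow_eq_adjoin [Nontrivial R] :
    Submodule.span (symmetricSubalgebra (Fin (n + 1)) R)
        (Set.range fun j : Fin (n + 1) => (X 0 : MvPolynomial (Fin (n + 1)) R) ^ (j : ℕ)) =
      (Algebra.adjoin (symmetricSubalgebra (Fin (n + 1)) R) {X 0}).toSubmodule := by
  obtain ⟨p, hmonic, hdeg, hroot⟩ := exists_monic_aeval_X_eq_zero (R := R) (0 : Fin (n + 1))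
  rw [← Submodule.span_range_natDegree_eq_adjoin hmonic hroot, hdeg, Fintype.card_fin]
  congr 1
  ext
  simp [Fin.exists_iff]

lemma IsSymmetric.rename_succ_mem_adjoin_X_zero {u : MvPolynomial (Fin n) R}
    (hu : u.IsSymmetric) :
    rename Fin.succ u ∈ Algebra.adjoin (symmetricSubalgebra (Fin (n + 1)) R)
      {(X 0 : MvPolynomial (Fin (n + 1)) R)} := by
  set A := Algebra.adjoin (symmetricSubalgebra (Fin (n + 1)) R)
    {(X 0 : MvPolynomial (Fin (n + 1)) R)}
  rw [← Subalgebra.mem_restrictScalars R]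
  have hX : (X 0 : MvPolynomial (Fin (n + 1)) R) ∈ A.restrictScalars R :=
    (Subalgebra.mem_restrictScalars R).2 (Algebra.self_mem_adjoin_singleton _ _)
  have hS {s : MvPolynomial (Fin (n + 1)) R} (hs : s.IsSymmetric) : s ∈ A.restrictScalars R := by
    have := A.algebraMap_mem ⟨s, hs⟩
    rwa [Subalgebra.algebraMap_eq] at this
  have hesymm (k : ℕ) : rename Fin.succ (esymm (Fin n) R k) ∈ A.restrictScalars R := by
    induction k with
    | zero => simp [one_mem]
    | succ k ih =>
      rw [eq_sub_of_add_eq (esymm_fin_succ k).symm]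
      exact sub_mem (hS (esymm_isSymmetric _ R _)) (mul_mem hX ih)
  obtain ⟨p, hp⟩ := esymmAlgHom_fin_surjective R le_rfl ⟨u, hu⟩
  rw [show u = _ from congr_arg Subtype.val hp.symm, esymmAlgHom_apply, ← AlgHom.comp_apply,
    comp_aeval]
  apply Algebra.adjoin_le (Set.range_subset_iff.2 fun i => hesymm _)
  rw [Algebra.adjoin_range_eq_range_aeval]
  exact ⟨p, rfl⟩

lemma linearIndependent_X_zero_pow [IsDomain R] :
    LinearIndependent (symmetricSubalgebra (Fin (n + 1)) R)
      (fun j : Fin (n + 1) => (X 0 : MvPolynomial (Fin (n + 1)) R) ^ (j : ℕ)) := by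
  rw [Fintype.linearIndependent_iff]
  intro g hg j
  set Q := ∑ j : Fin (n + 1), Polynomial.monomial (j : ℕ) (g j : MvPolynomial (Fin (n + 1)) R)
  -- `Q` vanishes at every `X i` because the swap of `0` and `i` fixes its coefficients
  have hroot (i : Fin (n + 1)) : Q.eval (X i) = 0 := by
    have := congr_arg (rename (Equiv.swap 0 i)) hg
    simp only [map_sum, map_zero, Subalgebra.smul_def, smul_eq_mul, map_mul, map_pow, rename_X,
      Equiv.swap_apply_left, (g _).2 _] at this
    simpa [Q, Polynomial.eval_finsetSum] using this
  have hdeg : Q.natDegree < Fintype.card (Fin (n + 1)) := by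
    rw [Fintype.card_fin, Nat.lt_succ_iff]
    exact Polynomial.natDegree_sum_le_of_forall_le _ _ fun j _ =>
      (Polynomial.natDegree_monomial_le _).trans (Nat.lt_succ_iff.1 j.2)
  have hQ := Q.eq_zero_of_natDegree_lt_card_of_eval_eq_zero X_injective hroot hdeg
  simpa [Q, Polynomial.finsetSum_coeff, Polynomial.coeff_monomial, Fin.val_inj] using
    congr_arg (·.coeff j) hQ

variable {ι : Type*} [Fintype ι]

lemma linearIndependent_X_zero_pow_mul_rename_succ [IsDomain R] {b : ι → MvPolynomial (Fin n) R}
    (hb : LinearIndependent (symmetricSubalgebra (Fin n) R) b) :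
    LinearIndependent (symmetricSubalgebra (Fin (n + 1)) R)
      fun p : Fin (n + 1) × ι => X 0 ^ (p.1 : ℕ) * rename Fin.succ (b p.2) := by
  rw [Fintype.linearIndependent_iff]
  rintro g hg ⟨j, a⟩
  have hcol (a : ι) : ∑ j, g (j, a) • (X 0 : MvPolynomial (Fin (n + 1)) R) ^ (j : ℕ) = 0 := by
    refine (finSuccEquiv R n).injective ?_
    rw [map_zero]
    refine hb.eq_zero_of_sum_mul_C_eq_zero
      (p := fun a => finSuccEquiv R n (∑ j, g (j, a) • X 0 ^ (j : ℕ))) (fun a => ?_) ?_ a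
    · simp only [map_sum, Subalgebra.smul_def, smul_eq_mul, map_mul, map_pow, finSuccEquiv_X_zero]
      refine Subsemiring.sum_mem _ fun j _ => Subsemiring.mul_mem _ ?_
        (Subsemiring.pow_mem _ (Polynomial.X_mem_lifts _) _)
      exact (Polynomial.lifts_iff_coeff_lifts _).2 fun k =>
        ⟨⟨_, (g (j, a)).2.coeff_finSuccEquiv k⟩, rfl⟩
    · simp_rw [← finSuccEquiv_rename_succ, ← map_mul, ← map_sum, Finset.sum_mul]
      rw [Finset.sum_comm, ← Fintype.sum_prod_type']
      simpa [mul_assoc] using congr_arg (finSuccEquiv R n) hg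
  exact Fintype.linearIndependent_iff.1 linearIndependent_X_zero_pow _ (hcol a) j

lemma span_X_zero_pow_mul_rename_succ_eq_top [Nontrivial R] {b : ι → MvPolynomial (Fin n) R}
    (hb : Submodule.span (symmetricSubalgebra (Fin n) R) (Set.range b) = ⊤) :
    Submodule.span (symmetricSubalgebra (Fin (n + 1)) R)
      (Set.range fun p : Fin (n + 1) × ι => X 0 ^ (p.1 : ℕ) * rename Fin.succ (b p.2)) = ⊤ := by
  set A := Algebra.adjoin (symmetricSubalgebra (Fin (n + 1)) R)
    {(X 0 : MvPolynomial (Fin (n + 1)) R)}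
  have hprod : Submodule.span (symmetricSubalgebra (Fin (n + 1)) R)
      (Set.range fun p : Fin (n + 1) × ι => X 0 ^ (p.1 : ℕ) * rename Fin.succ (b p.2)) =
        A.toSubmodule * Submodule.span _ (Set.range (rename Fin.succ ∘ b)) := by
    rw [← span_X_zero_pow_eq_adjoin, Submodule.span_mul_span, ← Set.image2_mul, Set.image2_range]
    rfl
  rw [eq_top_iff, hprod]
  intro f _
  rw [← (finSuccEquiv R n).symm_apply_apply f, (finSuccEquiv R n f).as_sum_range_C_mul_X_pow,
    map_sum]
  refine Submodule.sum_mem _ fun k _ => ?_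
  obtain ⟨c, hc⟩ := (Submodule.mem_span_range_iff_exists_fun _).1
    (hb.ge (Submodule.mem_top (x := (finSuccEquiv R n f).coeff k)))
  rw [map_mul, map_pow, finSuccEquiv_symm_C, finSuccEquiv_symm_X, ← hc, map_sum, Finset.sum_mul]
  refine Submodule.sum_mem _ fun a _ => ?_
  rw [Subalgebra.smul_def, smul_eq_mul, map_mul, mul_right_comm]
  exact Submodule.mul_mem_mul (A.mul_mem ((c a).2.rename_succ_mem_adjoin_X_zero)
    (A.pow_mem (Algebra.self_mem_adjoin_singleton _ _) k)) (Submodule.subset_span ⟨a, rfl⟩)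

noncomputable def symmetricBasisFinSucc [IsDomain R]
    (b : Module.Basis ι (symmetricSubalgebra (Fin n) R) (MvPolynomial (Fin n) R)) :
    Module.Basis (Fin (n + 1) × ι) (symmetricSubalgebra (Fin (n + 1)) R)
      (MvPolynomial (Fin (n + 1)) R) :=
  .mk (linearIndependent_X_zero_pow_mul_rename_succ b.linearIndependent)
    (span_X_zero_pow_mul_rename_succ_eq_top b.span_eq).ge

lemma symmetricBasisFinSucc_apply [IsDomain R]
    (b : Module.Basis ι (symmetricSubalgebra (Fin n) R) (MvPolynomial (Fin n) R))
    (p : Fin (n + 1) × ι) :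
    symmetricBasisFinSucc b p = X 0 ^ (p.1 : ℕ) * rename Fin.succ (b p.2) := by
  simp [symmetricBasisFinSucc]

lemma IsSymmetric.of_subsingleton {σ : Type*} [Subsingleton σ] (f : MvPolynomial σ R) :
    f.IsSymmetric :=
  fun e => by rw [Subsingleton.elim e (Equiv.refl σ), Equiv.coe_refl, rename_id_apply]

noncomputable def symmetricBasisFinZero :
    Module.Basis (Fin 1) (symmetricSubalgebra (Fin 0) R) (MvPolynomial (Fin 0) R) :=
  (Module.Basis.singleton _ _).map <| LinearEquiv.ofBijective (Algebra.linearMap _ _)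
    ⟨Subtype.val_injective, fun f => ⟨⟨f, .of_subsingleton f⟩, rfl⟩⟩

lemma symmetricBasisFinZero_apply (i : Fin 1) : symmetricBasisFinZero (R := R) i = 1 := by
  rw [symmetricBasisFinZero, Module.Basis.map_apply, Module.Basis.singleton_apply]
  rfl

theorem exists_isHomogeneous_basis_symmetricSubalgebra [IsDomain R] (n : ℕ) :
    ∃ (b : Module.Basis (Fin n !) (symmetricSubalgebra (Fin n) R) (MvPolynomial (Fin n) R))
      (d : Fin n ! → ℕ), (∀ i, (b i).IsHomogeneous (d i)) ∧
        ∑ i, (Polynomial.X : Polynomial ℤ) ^ d i =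
          ∏ m ∈ Finset.range n, ∑ j ∈ Finset.range (m + 1), Polynomial.X ^ j := by
  induction n with
  | zero =>
    refine ⟨symmetricBasisFinZero.reindex (finCongr Nat.factorial_zero.symm), fun _ => 0,
      fun i => ?_, ?_⟩
    · rw [Module.Basis.reindex_apply, symmetricBasisFinZero_apply]
      exact isHomogeneous_one (Fin 0) R
    · simp only [pow_zero, Finset.sum_const, nsmul_eq_mul, mul_one, Finset.prod_range_zero]
      exact_mod_cast Finset.card_fin 1
  | succ n ih =>
    obtain ⟨b, d, hb, hd⟩ := ih
    let e : Fin (n + 1) × Fin n ! ≃ Fin (n + 1)! :=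
      finProdFinEquiv.trans (finCongr (Nat.factorial_succ n).symm)
    refine ⟨(symmetricBasisFinSucc b).reindex e, fun i => (e.symm i).1 + d (e.symm i).2,
      fun i => ?_, ?_⟩
    · rw [Module.Basis.reindex_apply, symmetricBasisFinSucc_apply]
      exact (isHomogeneous_X_pow _ _).mul (hb _).rename_isHomogeneous
    · rw [e.symm.sum_comp fun p => Polynomial.X ^ ((p.1 : ℕ) + d p.2), Fintype.sum_prod_type,
        Finset.prod_range_succ, ← hd, mul_comm, Finset.sum_mul_sum, ← Fin.sum_univ_eq_sum_range]
      simp_rw [pow_add]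

end MvPolynomial

/-- `ℤ[x_1,…,x_r]` is free over the symmetric polynomials `ℤ[x_1,…,x_r]^{S_r}` of rank `r!`;
with the variables placed in degree `2`, a homogeneous basis has graded rank the `q`-factorial
`(r)! = (r)(r-1)⋯(1)` where `(m) = 1 + q² + ⋯ + q^{2m-2}`. -/
theorem mvPolynomial_free_over_symmetric_qFactorial (r : ℕ) :
    ∃ (b : Module.Basis (Fin (Nat.factorial r)) (symmetricSubalgebra (Fin r) ℤ)
        (MvPolynomial (Fin r) ℤ)) (d : Fin (Nat.factorial r) → ℕ),
      (∀ i, MvPolynomial.IsHomogeneous (b i) (d i)) ∧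
      (∑ i, (Polynomial.X : Polynomial ℤ) ^ (2 * d i))
        = ∏ m ∈ Finset.range r, ∑ j ∈ Finset.range (m + 1), Polynomial.X ^ (2 * j) := by
  obtain ⟨b, d, hb, hd⟩ := exists_isHomogeneous_basis_symmetricSubalgebra (R := ℤ) r
  refine ⟨b, d, hb, ?_⟩
  simpa [pow_mul, map_sum, map_prod] using congr_arg (Polynomial.expand ℤ 2) hd
end
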